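/- arXiv:2402.12555 — 2 statements merged into one kernel-verified Lean document; each statement's English description precedes it below -/
import Mathlib

section
/- Double robustness of modified G-estimation, treatment-free half: Let H* : Ω → ℝ^m be measurable, A* a treatment indicator, and Y integrable. Suppose there are a Borel function ν* : ℝ^m → ℝ with ν*(H*) integrable, a bounded Borel function C* : ℝ^m → ℝ, and a bounded σ(H*, A*)-measurable random variable Π such that E[Y | σ(H*, A*)] = ν*(H*) + Π·C*(H*) μ-a.e. Then taking θ = −ν* (the correctly specified observed-data treatment-free model), for EVERY bounded Borel function p̃ : ℝ^m → ℝ (whether or not it equals P(A* = 1 | σ(H*))) and every bounded Borel λ : ℝ^m → ℝ, E[ λ(H*)·(A* − p̃(H*))·(Y − Π·C*(H*) − ν*(H*)) ] = 0. -/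
open MeasureTheory

/-!
Write `𝒢 = σ(H*, A*)` and `g = λ(H*) (A* - p̃(H*))`, a bounded `𝒢`-measurable weight (whatever `p̃`
is). With `θ = -ν*` the residual `Y - Π C*(H*) - ν*(H*)` is exactly `Y - E[Y | 𝒢]`, and a bounded
`𝒢`-measurable weight is orthogonal to it: pulling `g` out of the conditional expectation and
integrating gives `E[g E[Y | 𝒢]] = E[E[g Y | 𝒢]] = E[g Y]`.
-/

section CondExp

variable {Ω : Type*} {m m₀ : MeasurableSpace Ω} {μ : Measure Ω}

theorem integral_mul_condExp_of_stronglyMeasurable (hm : m ≤ m₀) [SigmaFinite (μ.trim hm)]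
    {g Y : Ω → ℝ} {C : ℝ} (hg : StronglyMeasurable[m] g) (hgC : ∀ᵐ ω ∂μ, ‖g ω‖ ≤ C)
    (hY : Integrable Y μ) :
    ∫ ω, g ω * (μ[Y | m]) ω ∂μ = ∫ ω, g ω * Y ω ∂μ := by
  have hgY : Integrable (g * Y) μ := hY.bdd_mul (hg.mono hm).aestronglyMeasurable hgC
  calc ∫ ω, g ω * (μ[Y | m]) ω ∂μ = ∫ ω, (μ[g * Y | m]) ω ∂μ :=
        integral_congr_ae (condExp_mul_of_stronglyMeasurable_left hg hgY hY).symm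
    _ = ∫ ω, g ω * Y ω ∂μ := integral_condExp hm

theorem integral_mul_sub_condExp_eq_zero (hm : m ≤ m₀) [SigmaFinite (μ.trim hm)]
    {g Y : Ω → ℝ} {C : ℝ} (hg : StronglyMeasurable[m] g) (hgC : ∀ᵐ ω ∂μ, ‖g ω‖ ≤ C)
    (hY : Integrable Y μ) :
    ∫ ω, g ω * (Y ω - (μ[Y | m]) ω) ∂μ = 0 := by
  have hgY : Integrable (fun ω => g ω * Y ω) μ :=
    hY.bdd_mul (hg.mono hm).aestronglyMeasurable hgC
  have hgcondExp : Integrable (fun ω => g ω * (μ[Y | m]) ω) μ :=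
    integrable_condExp.bdd_mul (hg.mono hm).aestronglyMeasurable hgC
  simp_rw [mul_sub]
  rw [integral_sub hgY hgcondExp, integral_mul_condExp_of_stronglyMeasurable hm hg hgC hY,
    sub_self]

end CondExp

theorem modified_G_estimation_doubly_robust_treatment_free_general
    {Ω : Type*} [MeasurableSpace Ω] (μ : Measure Ω) [IsProbabilityMeasure μ]
    {m : ℕ} (Hstar : Ω → (Fin m → ℝ)) (hHstar : Measurable Hstar)
    (Astar : Ω → ℝ) (hAstar : Measurable Astar)
    (hAstar01 : ∀ ω, Astar ω = 0 ∨ Astar ω = 1)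
    (Y : Ω → ℝ) (hY : Integrable Y μ)
    (νstar Cstar : (Fin m → ℝ) → ℝ)
    (Pi : Ω → ℝ)
    (hblip : μ[Y | MeasurableSpace.comap (fun ω => (Hstar ω, Astar ω)) inferInstance]
      =ᵐ[μ] fun ω => νstar (Hstar ω) + Pi ω * Cstar (Hstar ω)) :
    ∀ ptilde lam : (Fin m → ℝ) → ℝ, Measurable ptilde → Measurable lam →
      (∃ M, ∀ x, |ptilde x| ≤ M) → (∃ M, ∀ x, |lam x| ≤ M) →
      ∫ ω, lam (Hstar ω) * (Astar ω - ptilde (Hstar ω))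
          * (Y ω - Pi ω * Cstar (Hstar ω) - νstar (Hstar ω)) ∂μ = 0 := by
  rintro ptilde lam hptilde hlam ⟨Mp, hMp⟩ ⟨Ml, hMl⟩
  set 𝒢 := MeasurableSpace.comap (fun ω => (Hstar ω, Astar ω)) inferInstance
  have hHA : Measurable[𝒢] fun ω => (Hstar ω, Astar ω) := comap_measurable _
  have hH : Measurable[𝒢] Hstar := measurable_fst.comp hHA
  have hg : StronglyMeasurable[𝒢] fun ω => lam (Hstar ω) * (Astar ω - ptilde (Hstar ω)) :=
    ((hlam.comp hH).mul ((measurable_snd.comp hHA).sub (hptilde.comp hH))).stronglyMeasurable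
  have hA : ∀ ω, |Astar ω| ≤ 1 := fun ω => by rcases hAstar01 ω with h | h <;> simp [h]
  have hgC : ∀ ω, ‖lam (Hstar ω) * (Astar ω - ptilde (Hstar ω))‖ ≤ Ml * (1 + Mp) := fun ω => by
    rw [Real.norm_eq_abs, abs_mul]
    exact mul_le_mul (hMl _) ((abs_sub (Astar ω) _).trans (add_le_add (hA ω) (hMp _)))
      (abs_nonneg _) ((abs_nonneg (lam (Hstar ω))).trans (hMl _))
  rw [← integral_mul_sub_condExp_eq_zero (hHstar.prodMk hAstar).comap_le hg
    (ae_of_all _ hgC) hY]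
  refine integral_congr_ae ?_
  filter_upwards [hblip] with ω hω
  rw [hω]
  ring

/-- Double robustness of modified G-estimation, treatment-free half: with the
correctly specified observed-data treatment-free model `θ = -ν*`, the modified
G-estimating function is unbiased for every posited model `p̃` of
`P(A* = 1 | σ(H*))`. -/
theorem modified_G_estimation_doubly_robust_treatment_free
    {Ω : Type*} [MeasurableSpace Ω] (μ : Measure Ω) [IsProbabilityMeasure μ]
    {m : ℕ} (Hstar : Ω → (Fin m → ℝ)) (hHstar : Measurable Hstar)
    (Astar : Ω → ℝ) (hAstar : Measurable Astar)
    (hAstar01 : ∀ ω, Astar ω = 0 ∨ Astar ω = 1)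
    (Y : Ω → ℝ) (hY : Integrable Y μ)
    (νstar Cstar : (Fin m → ℝ) → ℝ) (hνstar : Measurable νstar) (hCstar : Measurable Cstar)
    (hνstarint : Integrable (fun ω => νstar (Hstar ω)) μ)
    (hCstarbdd : ∃ M, ∀ x, |Cstar x| ≤ M)
    (Pi : Ω → ℝ)
    (hPi : Measurable[MeasurableSpace.comap (fun ω => (Hstar ω, Astar ω)) inferInstance] Pi)
    (hPibdd : ∃ M, ∀ ω, |Pi ω| ≤ M)
    (hblip : μ[Y | MeasurableSpace.comap (fun ω => (Hstar ω, Astar ω)) inferInstance]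
      =ᵐ[μ] fun ω => νstar (Hstar ω) + Pi ω * Cstar (Hstar ω)) :
    ∀ ptilde lam : (Fin m → ℝ) → ℝ, Measurable ptilde → Measurable lam →
      (∃ M, ∀ x, |ptilde x| ≤ M) → (∃ M, ∀ x, |lam x| ≤ M) →
      ∫ ω, lam (Hstar ω) * (Astar ω - ptilde (Hstar ω))
          * (Y ω - Pi ω * Cstar (Hstar ω) - νstar (Hstar ω)) ∂μ = 0 :=
  modified_G_estimation_doubly_robust_treatment_free_general μ Hstar hHstar Astar hAstar hAstar01 Y
    hY νstar Cstar Pi hblip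
end

section
/- Single-stage unbiasedness of modified G-estimation from the primitive conditions: Let H : Ω → ℝ^d be the true history, A the true treatment indicator, A* the prescribed treatment indicator, and H* : Ω → ℝ^m the observed history with σ(H*) ⊆ σ(H, A*). Let Y be integrable with E[Y | σ(H,A)] = ν(H) + A·C(H) μ-a.e. for Borel ν, C : ℝ^d → ℝ with ν(H) integrable and C bounded. Assume Condition 1: E[Y | σ(H, A, A*)] = E[Y | σ(H, A)] μ-a.e.; Condition 2: E[ν(H) | σ(H*, A*)] = E[ν(H) | σ(H*)] μ-a.e.; Condition 3: E[A·C(H) | σ(H*, A*)] = E[A | σ(H*, A*)]·E[C(H) | σ(H*, A*)] μ-a.e.; and let p : ℝ^m → ℝ be Borel with p(H*) = E[A* | σ(H*)] μ-a.e. Then for all bounded Borel λ, θ : ℝ^m → ℝ, E[ λ(H*)·(A* − p(H*))·(Y − E[A | σ(H*, A*)]·E[C(H) | σ(H*, A*)] + θ(H*)) ] = 0. -/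
/-!
Condition on `𝓖 = σ(H*, A*)`. The instrument `λ(H*)(A* - p(H*))` is `𝓖`-measurable, and by
the tower property through `σ(H, A, A*)` and `σ(H, A)`, the blip decomposition and
Conditions 1–3, the residual `Y - π* C* + θ(H*)` has `𝓖`-conditional expectation
`E[ν(H) | H*] + θ(H*)`, which is `σ(H*)`-measurable. Conditioning once more on `σ(H*)` leaves
`E[A* - p(H*) | H*] = 0` as a factor.
-/

open MeasureTheory

lemma abs_le_one_of_eq_zero_or_eq_one {x : ℝ} (hx : x = 0 ∨ x = 1) : |x| ≤ 1 := by
  rcases hx with rfl | rfl <;> simp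

lemma comap_prodMk_le_comap_prodMk_prodMk {Ω α β γ δ : Type*} [MeasurableSpace α]
    [MeasurableSpace β] [MeasurableSpace γ] [MeasurableSpace δ] {f : Ω → α} {g : Ω → β}
    {a : Ω → γ} {b : Ω → δ}
    (h : MeasurableSpace.comap f inferInstance ≤
      MeasurableSpace.comap (fun ω => (g ω, b ω)) inferInstance) :
    MeasurableSpace.comap (fun ω => (f ω, b ω)) inferInstance ≤
      MeasurableSpace.comap (fun ω => (g ω, a ω, b ω)) inferInstance := by
  set 𝓕 := MeasurableSpace.comap (fun ω => (g ω, a ω, b ω)) inferInstance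
  have hg : Measurable[𝓕] g := measurable_fst.comp (comap_measurable _)
  have hb : Measurable[𝓕] b := measurable_snd.comp (measurable_snd.comp (comap_measurable _))
  have hf : Measurable[𝓕] f := .of_comap_le (h.trans (hg.prodMk hb).comap_le)
  exact (hf.prodMk hb).comap_le

section ConditionalExpectation

variable {Ω : Type*} {m m' m₀ : MeasurableSpace Ω} {μ : Measure Ω}

lemma Measurable.integrable_of_abs_le [IsFiniteMeasure μ] {f : Ω → ℝ} (hf : Measurable f)
    {c : ℝ} (hc : ∀ ω, |f ω| ≤ c) : Integrable f μ :=
  .of_bound hf.aestronglyMeasurable c (ae_of_all _ hc)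

lemma ae_abs_sub_le_of_ae_eq_condExp {f q : Ω → ℝ} {c : ℝ} (hf : ∀ ω, |f ω| ≤ c)
    (hq : q =ᵐ[μ] μ[f | m]) : ∀ᵐ ω ∂μ, |f ω - q ω| ≤ 2 * c := by
  filter_upwards [hq, ae_bdd_abs_condExp_of_ae_bdd_abs (m := m) (ae_of_all μ hf)]
    with ω hqω hbound
  calc |f ω - q ω| ≤ |f ω| + |q ω| := abs_sub _ _
    _ ≤ 2 * c := by rw [hqω]; linarith [hf ω]

lemma integral_mul_eq_integral_mul_condExp [IsFiniteMeasure μ] (hm : m ≤ m₀) {f g : Ω → ℝ}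
    (hf : StronglyMeasurable[m] f) (hg : Integrable g μ) {c : ℝ}
    (hf_bound : ∀ᵐ ω ∂μ, ‖f ω‖ ≤ c) :
    ∫ ω, f ω * g ω ∂μ = ∫ ω, f ω * μ[g | m] ω ∂μ :=
  calc ∫ ω, (f * g) ω ∂μ = ∫ ω, μ[f * g | m] ω ∂μ := (integral_condExp hm).symm
    _ = ∫ ω, (f * μ[g | m]) ω ∂μ :=
      integral_congr_ae (condExp_stronglyMeasurable_mul_of_bound hm hf hg c hf_bound)

lemma integral_mul_eq_zero_of_condExp_eq_zero [IsFiniteMeasure μ] (hm : m ≤ m₀) {f g : Ω → ℝ}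
    (hf : StronglyMeasurable[m] f) (hfg : Integrable (f * g) μ) (hg : Integrable g μ)
    (hg_zero : μ[g | m] =ᵐ[μ] 0) :
    ∫ ω, f ω * g ω ∂μ = 0 :=
  calc ∫ ω, (f * g) ω ∂μ = ∫ ω, μ[f * g | m] ω ∂μ := (integral_condExp hm).symm
    _ = ∫ ω, (0 : Ω → ℝ) ω ∂μ := by
      refine integral_congr_ae ?_
      filter_upwards [condExp_mul_of_stronglyMeasurable_left hf hfg hg, hg_zero] with ω h h0
      simp [h, h0]
    _ = 0 := by simp

lemma condExp_eq_add_of_le_of_condExp_eq_add [IsFiniteMeasure μ] (hm : m ≤ m') (hm' : m' ≤ m₀)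
    {Y u v : Ω → ℝ} (h : μ[Y | m'] =ᵐ[μ] u + v) (hu : Integrable u μ) (hv : Integrable v μ) :
    μ[Y | m] =ᵐ[μ] μ[u | m] + μ[v | m] :=
  (condExp_condExp_of_le hm hm').symm.trans ((condExp_congr_ae h).trans (condExp_add hu hv m))

lemma condExp_sub_add_of_condExp_eq_add [IsFiniteMeasure μ] (hm : m ≤ m₀) {Y u v w : Ω → ℝ}
    (hY : Integrable Y μ) (hYm : μ[Y | m] =ᵐ[μ] u + v) (hv : StronglyMeasurable[m] v)
    (hvi : Integrable v μ) (hw : StronglyMeasurable[m] w) (hwi : Integrable w μ) :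
    μ[Y - v + w | m] =ᵐ[μ] u + w := by
  filter_upwards [condExp_add (hY.sub hvi) hwi m, condExp_sub hY hvi m, hYm] with ω h₁ h₂ h₃
  simp only [h₁, Pi.add_apply, h₂, Pi.sub_apply, h₃, condExp_of_stronglyMeasurable hm hv hvi,
    condExp_of_stronglyMeasurable hm hw hwi]
  ring

lemma condExp_sub_eq_zero_of_ae_eq_condExp [IsFiniteMeasure μ] (hm : m ≤ m₀) {Z q : Ω → ℝ}
    (hZ : Integrable Z μ) (hq : q =ᵐ[μ] μ[Z | m]) : μ[Z - q | m] =ᵐ[μ] 0 := by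
  have hqi : Integrable q μ := integrable_condExp.congr hq.symm
  filter_upwards [condExp_sub hZ hqi m, condExp_congr_ae (m := m) hq,
    condExp_condExp_of_le (μ := μ) (f := Z) le_rfl hm] with ω h₁ h₂ h₃
  simp [h₁, h₂, h₃]

lemma integral_mul_mul_eq_zero_of_condExp_eq [IsFiniteMeasure μ] (hm : m ≤ m') (hm' : m' ≤ m₀)
    {a Z X g : Ω → ℝ} (ha : StronglyMeasurable[m] a) (hZ : StronglyMeasurable[m'] Z)
    (hZi : Integrable Z μ) (hZ_zero : μ[Z | m] =ᵐ[μ] 0) {c : ℝ}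
    (haZ_bound : ∀ᵐ ω ∂μ, ‖a ω * Z ω‖ ≤ c) (hX : Integrable X μ)
    (hg : StronglyMeasurable[m] g) (hXg : μ[X | m'] =ᵐ[μ] g) :
    ∫ ω, a ω * Z ω * X ω ∂μ = 0 := by
  have haZ : StronglyMeasurable[m'] (fun ω => a ω * Z ω) := (ha.mono hm).mul hZ
  have hgi : Integrable g μ := integrable_condExp.congr hXg
  calc ∫ ω, a ω * Z ω * X ω ∂μ = ∫ ω, a ω * Z ω * g ω ∂μ := by
        rw [integral_mul_eq_integral_mul_condExp hm' haZ hX haZ_bound]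
        exact integral_congr_ae (hXg.mono fun ω h => by simp only [h])
    _ = ∫ ω, (a * g) ω * Z ω ∂μ := by
        congr 1 with ω
        simp only [Pi.mul_apply]
        ring
    _ = 0 := by
        refine integral_mul_eq_zero_of_condExp_eq_zero (hm.trans hm') (ha.mul hg) ?_ hZi hZ_zero
        refine (hgi.bdd_mul (haZ.mono hm').aestronglyMeasurable haZ_bound).congr ?_
        exact ae_of_all _ fun ω => by simp only [Pi.mul_apply]; ring

end ConditionalExpectation

theorem modified_G_estimation_unbiased_from_primitives_general
    {Ω : Type*} [MeasurableSpace Ω] (μ : Measure Ω) [IsProbabilityMeasure μ]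
    {d m : ℕ} (H : Ω → (Fin d → ℝ)) (hH : Measurable H)
    (A Astar : Ω → ℝ) (hA : Measurable A) (hAstar : Measurable Astar)
    (hA01 : ∀ ω, A ω = 0 ∨ A ω = 1) (hAstar01 : ∀ ω, Astar ω = 0 ∨ Astar ω = 1)
    (Hstar : Ω → (Fin m → ℝ)) (hHstar : Measurable Hstar)
    (hHstar_sub : MeasurableSpace.comap Hstar inferInstance ≤
      MeasurableSpace.comap (fun ω => (H ω, Astar ω)) inferInstance)
    (Y : Ω → ℝ) (hY : Integrable Y μ)
    (ν C : (Fin d → ℝ) → ℝ) (hC : Measurable C)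
    (hνint : Integrable (fun ω => ν (H ω)) μ)
    (hCbdd : ∃ M, ∀ x, |C x| ≤ M)
    (hblip : μ[Y | MeasurableSpace.comap (fun ω => (H ω, A ω)) inferInstance]
      =ᵐ[μ] fun ω => ν (H ω) + A ω * C (H ω))
    (hcond1 : μ[Y | MeasurableSpace.comap (fun ω => (H ω, A ω, Astar ω)) inferInstance]
      =ᵐ[μ] μ[Y | MeasurableSpace.comap (fun ω => (H ω, A ω)) inferInstance])
    (hcond2 : μ[fun ω => ν (H ω) |
          MeasurableSpace.comap (fun ω => (Hstar ω, Astar ω)) inferInstance]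
      =ᵐ[μ] μ[fun ω => ν (H ω) | MeasurableSpace.comap Hstar inferInstance])
    (hcond3 : μ[fun ω => A ω * C (H ω) |
          MeasurableSpace.comap (fun ω => (Hstar ω, Astar ω)) inferInstance]
      =ᵐ[μ] fun ω =>
        (μ[A | MeasurableSpace.comap (fun ω' => (Hstar ω', Astar ω')) inferInstance]) ω
        * (μ[fun ω' => C (H ω') |
            MeasurableSpace.comap (fun ω' => (Hstar ω', Astar ω')) inferInstance]) ω)
    (p : (Fin m → ℝ) → ℝ) (hp : Measurable p)
    (hpcorrect : (fun ω => p (Hstar ω))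
      =ᵐ[μ] μ[Astar | MeasurableSpace.comap Hstar inferInstance]) :
    ∀ lam θ : (Fin m → ℝ) → ℝ, Measurable lam → Measurable θ →
      (∃ M, ∀ x, |lam x| ≤ M) → (∃ M, ∀ x, |θ x| ≤ M) →
      ∫ ω, lam (Hstar ω) * (Astar ω - p (Hstar ω))
          * (Y ω
            - (μ[A | MeasurableSpace.comap (fun ω' => (Hstar ω', Astar ω')) inferInstance]) ω
              * (μ[fun ω' => C (H ω') |
                  MeasurableSpace.comap (fun ω' => (Hstar ω', Astar ω')) inferInstance]) ω
            + θ (Hstar ω)) ∂μ = 0 := by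
  intro lam θ hlam hθ ⟨Ml, hMl⟩ ⟨Mθ, hMθ⟩
  obtain ⟨Mc, hMc⟩ := hCbdd
  set 𝓖 := MeasurableSpace.comap (fun ω => (Hstar ω, Astar ω)) inferInstance
  set 𝓗 := MeasurableSpace.comap Hstar inferInstance
  have hHstar𝓗 : Measurable[𝓗] Hstar := comap_measurable Hstar
  have hHstar𝓖 : Measurable[𝓖] Hstar := measurable_fst.comp (comap_measurable _)
  have hAstar𝓖 : Measurable[𝓖] Astar := measurable_snd.comp (comap_measurable _)
  have h𝓖_le := comap_prodMk_le_comap_prodMk_prodMk (a := A) hHstar_sub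
  have hA_bound ω : |A ω| ≤ 1 := abs_le_one_of_eq_zero_or_eq_one (hA01 ω)
  have hAstar_bound ω : |Astar ω| ≤ 1 := abs_le_one_of_eq_zero_or_eq_one (hAstar01 ω)
  have hAstari : Integrable Astar μ := hAstar.integrable_of_abs_le hAstar_bound
  have hθi : Integrable (fun ω => θ (Hstar ω)) μ :=
    (hθ.comp hHstar).integrable_of_abs_le fun ω => hMθ _
  have hACi : Integrable (fun ω => A ω * C (H ω)) μ :=
    ((hC.comp hH).integrable_of_abs_le fun ω => hMc (H ω)).bdd_mul hA.aestronglyMeasurable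
      (ae_of_all _ hA_bound)
  have hπCi : Integrable (fun ω => μ[A | 𝓖] ω * μ[fun ω' => C (H ω') | 𝓖] ω) μ :=
    integrable_condExp.mul_bdd integrable_condExp.aestronglyMeasurable
      (ae_bdd_abs_condExp_of_ae_bdd_abs (ae_of_all _ fun ω => hMc (H ω)))
  have hY𝓖 : μ[Y | 𝓖] =ᵐ[μ] μ[fun ω => ν (H ω) | 𝓗]
      + fun ω => μ[A | 𝓖] ω * μ[fun ω' => C (H ω') | 𝓖] ω :=
    (condExp_eq_add_of_le_of_condExp_eq_add h𝓖_le (hH.prodMk (hA.prodMk hAstar)).comap_le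
      (hcond1.trans hblip) hνint hACi).trans (hcond2.add hcond3)
  have hX𝓖 := condExp_sub_add_of_condExp_eq_add (hHstar.prodMk hAstar).comap_le hY hY𝓖
    (stronglyMeasurable_condExp.mul stronglyMeasurable_condExp) hπCi
    (hθ.comp hHstar𝓖).stronglyMeasurable hθi
  have hinstrument_bound : ∀ᵐ ω ∂μ, ‖lam (Hstar ω) * (Astar ω - p (Hstar ω))‖ ≤ Ml * 2 := by
    filter_upwards [ae_abs_sub_le_of_ae_eq_condExp hAstar_bound hpcorrect] with ω h
    rw [Real.norm_eq_abs, abs_mul]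
    exact mul_le_mul (hMl _) (by linarith) (abs_nonneg _) ((abs_nonneg _).trans (hMl 0))
  exact integral_mul_mul_eq_zero_of_condExp_eq hHstar𝓖.comap_le (hHstar.prodMk hAstar).comap_le
    (hlam.comp hHstar𝓗).stronglyMeasurable (hAstar𝓖.sub (hp.comp hHstar𝓖)).stronglyMeasurable
    (hAstari.sub (integrable_condExp.congr hpcorrect.symm))
    (condExp_sub_eq_zero_of_ae_eq_condExp hHstar.comap_le hAstari hpcorrect) hinstrument_bound
    ((hY.sub hπCi).add hθi) (stronglyMeasurable_condExp.add (hθ.comp hHstar𝓗).stronglyMeasurable)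
    hX𝓖

/-- Single-stage unbiasedness of modified G-estimation derived from the
primitive Conditions 1–3 of the paper, with correctly specified prescription
probability model `p(H*) = P(A* = 1 | σ(H*))`. -/
theorem modified_G_estimation_unbiased_from_primitives
    {Ω : Type*} [MeasurableSpace Ω] (μ : Measure Ω) [IsProbabilityMeasure μ]
    {d m : ℕ} (H : Ω → (Fin d → ℝ)) (hH : Measurable H)
    (A Astar : Ω → ℝ) (hA : Measurable A) (hAstar : Measurable Astar)
    (hA01 : ∀ ω, A ω = 0 ∨ A ω = 1) (hAstar01 : ∀ ω, Astar ω = 0 ∨ Astar ω = 1)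
    (Hstar : Ω → (Fin m → ℝ)) (hHstar : Measurable Hstar)
    (hHstar_sub : MeasurableSpace.comap Hstar inferInstance ≤
      MeasurableSpace.comap (fun ω => (H ω, Astar ω)) inferInstance)
    (Y : Ω → ℝ) (hY : Integrable Y μ)
    (ν C : (Fin d → ℝ) → ℝ) (hν : Measurable ν) (hC : Measurable C)
    (hνint : Integrable (fun ω => ν (H ω)) μ)
    (hCbdd : ∃ M, ∀ x, |C x| ≤ M)
    (hblip : μ[Y | MeasurableSpace.comap (fun ω => (H ω, A ω)) inferInstance]
      =ᵐ[μ] fun ω => ν (H ω) + A ω * C (H ω))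
    (hcond1 : μ[Y | MeasurableSpace.comap (fun ω => (H ω, A ω, Astar ω)) inferInstance]
      =ᵐ[μ] μ[Y | MeasurableSpace.comap (fun ω => (H ω, A ω)) inferInstance])
    (hcond2 : μ[fun ω => ν (H ω) |
          MeasurableSpace.comap (fun ω => (Hstar ω, Astar ω)) inferInstance]
      =ᵐ[μ] μ[fun ω => ν (H ω) | MeasurableSpace.comap Hstar inferInstance])
    (hcond3 : μ[fun ω => A ω * C (H ω) |
          MeasurableSpace.comap (fun ω => (Hstar ω, Astar ω)) inferInstance]
      =ᵐ[μ] fun ω =>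
        (μ[A | MeasurableSpace.comap (fun ω' => (Hstar ω', Astar ω')) inferInstance]) ω
        * (μ[fun ω' => C (H ω') |
            MeasurableSpace.comap (fun ω' => (Hstar ω', Astar ω')) inferInstance]) ω)
    (p : (Fin m → ℝ) → ℝ) (hp : Measurable p)
    (hpcorrect : (fun ω => p (Hstar ω))
      =ᵐ[μ] μ[Astar | MeasurableSpace.comap Hstar inferInstance]) :
    ∀ lam θ : (Fin m → ℝ) → ℝ, Measurable lam → Measurable θ →
      (∃ M, ∀ x, |lam x| ≤ M) → (∃ M, ∀ x, |θ x| ≤ M) →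
      ∫ ω, lam (Hstar ω) * (Astar ω - p (Hstar ω))
          * (Y ω
            - (μ[A | MeasurableSpace.comap (fun ω' => (Hstar ω', Astar ω')) inferInstance]) ω
              * (μ[fun ω' => C (H ω') |
                  MeasurableSpace.comap (fun ω' => (Hstar ω', Astar ω')) inferInstance]) ω
            + θ (Hstar ω)) ∂μ = 0 :=
  modified_G_estimation_unbiased_from_primitives_general μ H hH A Astar hA hAstar hA01 hAstar01
    Hstar hHstar hHstar_sub Y hY ν C hC hνint hCbdd hblip hcond1 hcond2 hcond3 p hp hpcorrect
end
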